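/- Reading an alignment A ∈ 𝒜^* from the initial state ⟨∅,…,∅,0⟩ of the multi-seed automaton for π^1,…,π^k ends in the final state if and only if there exist j ∈ [1..k] and a position p with p + s_j − 1 ≤ |A| such that π^j matches A at position p. -/
import Mathlib


variable {A : Type*}

/-- `π` matches the alignment `w` at the (1-based) position `p` (seed of span `s`). -/
def seedMatches (one : A) (π : ℕ → Finset A) (s : ℕ) (w : List A) (p : ℕ) : Prop :=
  1 ≤ p ∧ p + s ≤ w.length + 1 ∧
    ∀ i, 1 ≤ i → i ≤ s → w.getD (p + i - 2) one ∈ π i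

/-- One transition of the multi-seed automaton for the seeds `π 0, …, π (k-1)` of spans
`sp 0, …, sp (k-1)`: `none` is the final sink state, `some (X, t)` is the non-final state
`⟨X_1,…,X_k,t⟩`. -/
def mseedStep [DecidableEq A] {k : ℕ} (one : A) (π : Fin k → ℕ → Finset A)
    (sp : Fin k → ℕ) :
    Option ((Fin k → Finset ℕ) × ℕ) → A → Option ((Fin k → Finset ℕ) × ℕ)
  | none, _ => none
  | some (X, t), a =>
    if a = one then
      if ∃ j, (X j).sup id + (t + 1) = sp j then none else some (X, t + 1)
    else
      let Y : Fin k → Finset ℕ := fun j =>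
        ((Finset.Icc 1 (t + 1)).filter fun x => a ∈ π j x) ∪
        (((X j).filter fun x => x + t + 1 ≤ sp j ∧ a ∈ π j (x + t + 1)).image
          fun x => x + t + 1)
      if ∃ j, (Y j).sup id = sp j then none else some (Y, 0)

/-- Reading a word from a state of the multi-seed automaton. -/
def mseedRead [DecidableEq A] {k : ℕ} (one : A) (π : Fin k → ℕ → Finset A)
    (sp : Fin k → ℕ) (q : Option ((Fin k → Finset ℕ) × ℕ)) (w : List A) :
    Option ((Fin k → Finset ℕ) × ℕ) :=
  w.foldl (mseedStep one π sp) q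

section Aux

set_option linter.unusedSectionVars false
set_option linter.unusedVariables false
variable {A : Type*} [DecidableEq A] {k : ℕ} (one : A) (π : Fin k → ℕ → Finset A)
  (sp : Fin k → ℕ)

/-- prefix match of length `x` ending at position `u.length - t`. -/
def pm (u : List A) (j : Fin k) (x t : ℕ) : Prop :=
  ∀ i < x, u.getD (u.length - t - x + i) one ∈ π j (i + 1)

def Mtch (u : List A) : Prop :=
  ∃ j q, q + sp j ≤ u.length ∧ ∀ i < sp j, u.getD (q + i) one ∈ π j (i + 1)

def InvA (u : List A) (X : Fin k → Finset ℕ) (t : ℕ) : Prop :=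
  t ≤ u.length ∧ (∀ m < t, u.getD (u.length - 1 - m) one = one) ∧
    ∀ j x, x ∈ X j ↔
      1 ≤ x ∧ x + t ≤ u.length ∧ x + t + 1 ≤ sp j ∧ pm one π u j x t

variable {one π sp}

lemma getD_concat_lt (v : List A) (a d : A) {n : ℕ} (h : n < v.length) :
    (v ++ [a]).getD n d = v.getD n d :=
  List.getD_append _ _ _ _ h

lemma getD_concat_len (v : List A) (a d : A) {n : ℕ} (h : n = v.length) :
    (v ++ [a]).getD n d = a := by
  subst h
  rw [List.getD_eq_getElem?_getD]
  simp

lemma sup_eq_iff {s : Finset ℕ} {b : ℕ} (hb : 1 ≤ b) (h : ∀ x ∈ s, x ≤ b) :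
    s.sup id = b ↔ b ∈ s := by
  constructor
  · intro he
    have hne : s.Nonempty := by
      rcases s.eq_empty_or_nonempty with rfl | hne
      · simp at he; omega
      · exact hne
    obtain ⟨c, hc, hcs⟩ := Finset.exists_mem_eq_sup s hne id
    have : c = b := by rw [← he, hcs]; rfl
    exact this ▸ hc
  · intro hb'
    exact le_antisymm (Finset.sup_le fun x hx => h x hx) (Finset.le_sup (f := id) hb')

lemma allOnes (hone : ∀ j i, 1 ≤ i → i ≤ sp j → one ∈ π j i) (u : List A) {t : ℕ}
    (j : Fin k) (ht : t ≤ u.length)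
    (htr : ∀ m < t, u.getD (u.length - 1 - m) one = one)
    (hs1 : 1 ≤ sp j) (hsp : sp j ≤ t) : Mtch one π sp u := by
  refine ⟨j, u.length - sp j, by omega, fun i hi => ?_⟩
  rw [show u.length - sp j + i = u.length - 1 - (sp j - 1 - i) from by omega,
    htr _ (by omega)]
  exact hone j (i + 1) (by omega) (by omega)

lemma buildEnd (hone : ∀ j i, 1 ≤ i → i ≤ sp j → one ∈ π j i) {v : List A} {a : A}
    {j : Fin k} {x t y : ℕ} (hx : x + t + 1 = y) (hy : y ≤ sp j)
    (hxl : x + t ≤ v.length) (hpm : pm one π v j x t)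
    (htr : ∀ m < t, v.getD (v.length - 1 - m) one = one)
    (ha : a ∈ π j y) :
    ∀ i < y, (v ++ [a]).getD (v.length + 1 - y + i) one ∈ π j (i + 1) := by
  intro i hi
  by_cases h1 : i < x
  · rw [show v.length + 1 - y + i = v.length - t - x + i from by omega,
      getD_concat_lt v a one (by omega)]
    exact hpm i h1
  · by_cases h2 : i < x + t
    · rw [show v.length + 1 - y + i = v.length - 1 - (x + t - 1 - i) from by omega,
        getD_concat_lt v a one (by omega), htr _ (by omega)]
      exact hone j (i + 1) (by omega) (by omega)
    · have hix : i + 1 = y := by omega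
      rw [show v.length + 1 - y + i = v.length from by omega,
        getD_concat_len v a one rfl, hix]
      exact ha

lemma destructEnd {v : List A} {a : A} {j : Fin k} {y : ℕ} (h1 : 1 ≤ y)
    (hyl : y ≤ v.length + 1)
    (hm : ∀ i < y, (v ++ [a]).getD (v.length + 1 - y + i) one ∈ π j (i + 1)) :
    a ∈ π j y ∧ ∀ t, t + 1 < y → (y - t - 1) + t ≤ v.length ∧ pm one π v j (y - t - 1) t := by
  constructor
  · have h := hm (y - 1) (by omega)
    rwa [show v.length + 1 - y + (y - 1) = v.length from by omega,
      getD_concat_len v a one rfl, show y - 1 + 1 = y from by omega] at h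
  · intro t ht
    refine ⟨by omega, fun i hi => ?_⟩
    rw [show v.length - t - (y - t - 1) + i = v.length + 1 - y + i from by omega,
      ← getD_concat_lt v a one (show v.length + 1 - y + i < v.length from by omega)]
    exact hm i (by omega)

lemma Mtch_concat (v : List A) (a : A) :
    Mtch one π sp (v ++ [a]) ↔ Mtch one π sp v ∨
      ∃ j, sp j ≤ v.length + 1 ∧
        ∀ i < sp j, (v ++ [a]).getD (v.length + 1 - sp j + i) one ∈ π j (i + 1) := by
  constructor
  · rintro ⟨j, q, hq, hm⟩
    rw [List.length_append, List.length_singleton] at hq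
    by_cases h : q + sp j ≤ v.length
    · exact Or.inl ⟨j, q, h, fun i hi => by
        rw [← getD_concat_lt v a one (show q + i < v.length from by omega)]
        exact hm i hi⟩
    · refine Or.inr ⟨j, by omega, fun i hi => ?_⟩
      rw [show v.length + 1 - sp j + i = q + i from by omega]
      exact hm i hi
  · rintro (⟨j, q, hq, hm⟩ | ⟨j, hj, hm⟩)
    · refine ⟨j, q, by rw [List.length_append, List.length_singleton]; omega, fun i hi => ?_⟩
      rw [getD_concat_lt v a one (show q + i < v.length from by omega)]
      exact hm i hi
    · exact ⟨j, v.length + 1 - sp j,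
        by rw [List.length_append, List.length_singleton]; omega, hm⟩

end Aux
section MainSec
set_option linter.unusedSectionVars false
set_option linter.unusedVariables false
set_option maxHeartbeats 1000000

variable {A : Type*} [DecidableEq A] {k : ℕ}

def Ynext (π : Fin k → ℕ → Finset A) (sp : Fin k → ℕ) (X : Fin k → Finset ℕ)
    (t : ℕ) (a : A) : Fin k → Finset ℕ := fun j =>
  ((Finset.Icc 1 (t + 1)).filter fun x => a ∈ π j x) ∪
    (((X j).filter fun x => x + t + 1 ≤ sp j ∧ a ∈ π j (x + t + 1)).image
      fun x => x + t + 1)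

lemma mseedStep_some (one : A) (π : Fin k → ℕ → Finset A) (sp : Fin k → ℕ)
    (X : Fin k → Finset ℕ) (t : ℕ) (a : A) :
    mseedStep one π sp (some (X, t)) a =
      if a = one then
        if ∃ j, (X j).sup id + (t + 1) = sp j then none else some (X, t + 1)
      else
        if ∃ j, ((Ynext π sp X t a) j).sup id = sp j then none
        else some (Ynext π sp X t a, 0) := rfl

variable {one : A} {π : Fin k → ℕ → Finset A} {sp : Fin k → ℕ}

lemma mainLemma (hs : ∀ j, 1 ≤ sp j)
    (hone : ∀ j i, 1 ≤ i → i ≤ sp j → one ∈ π j i) (u : List A) :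
    (mseedRead one π sp (some (fun _ => (∅ : Finset ℕ), 0)) u = none ↔ Mtch one π sp u) ∧
      ∀ X t, mseedRead one π sp (some (fun _ => (∅ : Finset ℕ), 0)) u = some (X, t) →
        InvA one π sp u X t := by
  induction u using List.reverseRecOn with
  | nil =>
    constructor
    · simp only [mseedRead, List.foldl_nil]
      constructor
      · intro h; cases h
      · rintro ⟨j, q, hq, -⟩
        simp only [List.length_nil] at hq
        have := hs j; omega
    · intro X t h
      simp only [mseedRead, List.foldl_nil, Option.some.injEq, Prod.mk.injEq] at h
      obtain ⟨hX, ht⟩ := h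
      refine ⟨by omega, by omega, fun j x => ?_⟩
      rw [← hX]
      simp only [Finset.notMem_empty, false_iff, List.length_nil]
      rintro ⟨h1, h2, -⟩
      omega
  | append_singleton v a ih =>
    have hstep : mseedRead one π sp (some (fun _ => (∅ : Finset ℕ), 0)) (v ++ [a]) =
        mseedStep one π sp (mseedRead one π sp (some (fun _ => (∅ : Finset ℕ), 0)) v) a := by
      simp [mseedRead]
    rcases hv : mseedRead one π sp (some (fun _ => (∅ : Finset ℕ), 0)) v with _ | ⟨X, t⟩
    · -- previous state final
      rw [hv] at hstep
      have hM : Mtch one π sp v := ih.1.mp hv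
      have hres : mseedRead one π sp (some (fun _ => (∅ : Finset ℕ), 0)) (v ++ [a]) = none := by
        rw [hstep]; rfl
      refine ⟨⟨fun _ => (Mtch_concat v a).mpr (Or.inl hM), fun _ => hres⟩, fun X t h => ?_⟩
      rw [hres] at h; cases h
    · -- previous state some (X, t)
      rw [hv, mseedStep_some] at hstep
      obtain ⟨ht, htr, hchar⟩ := ih.2 X t hv
      have hnM : ¬ Mtch one π sp v := by
        intro h
        have := ih.1.mpr h
        rw [hv] at this; cases this
      have htlt : ∀ j, t < sp j := by
        intro j
        by_contra h
        exact hnM (allOnes hone v j ht htr (hs j) (by omega))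
      by_cases hao : a = one
      · rw [hao] at hstep ⊢
        rw [if_pos rfl] at hstep
        by_cases hex : ∃ j, (X j).sup id + (t + 1) = sp j
        · rw [if_pos hex] at hstep
          obtain ⟨j, hj⟩ := hex
          have key : sp j ≤ v.length + 1 ∧
              ∀ i < sp j, (v ++ [one]).getD (v.length + 1 - sp j + i) one ∈ π j (i + 1) := by
            rcases (X j).eq_empty_or_nonempty with he | hne
            · rw [he] at hj
              simp only [Finset.sup_empty, Nat.bot_eq_zero] at hj
              refine ⟨by omega, ?_⟩
              exact buildEnd hone (x := 0) (t := t) (by omega) le_rfl (by omega)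
                (fun i hi => absurd hi (by omega)) htr (hone j (sp j) (hs j) le_rfl)
            · obtain ⟨c, hc, hcs⟩ := Finset.exists_mem_eq_sup (X j) hne id
              obtain ⟨hc1, hc2, hc3, hc4⟩ := (hchar j c).mp hc
              have hcv : c + t + 1 = sp j := by
                have : (X j).sup id = c := by rw [hcs]; rfl
                omega
              refine ⟨by omega, ?_⟩
              exact buildEnd hone hcv le_rfl hc2 hc4 htr (hone j (sp j) (hs j) le_rfl)
          have hM' : Mtch one π sp (v ++ [one]) :=
            (Mtch_concat v one).mpr (Or.inr ⟨j, key.1, key.2⟩)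
          refine ⟨⟨fun _ => hM', fun _ => hstep⟩, fun X' t' h => ?_⟩
          rw [hstep] at h; cases h
        · rw [if_neg hex] at hstep
          have hnM' : ¬ Mtch one π sp (v ++ [one]) := by
            rw [Mtch_concat]
            rintro (h | ⟨j, hj, hm⟩)
            · exact hnM h
            · obtain ⟨ha', hd⟩ := destructEnd (hs j) hj hm
              refine hex ?_
              by_cases hts : t + 1 < sp j
              · obtain ⟨hd1, hd2⟩ := hd t hts
                have hx : sp j - t - 1 ∈ X j := (hchar j _).mpr
                  ⟨by omega, by omega, by omega, hd2⟩
                have hsup : (X j).sup id = sp j - t - 1 := by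
                  refine le_antisymm (Finset.sup_le fun b hb => ?_)
                    (Finset.le_sup (f := id) hx)
                  have := (hchar j b).mp hb
                  simp only [id]; omega
                exact ⟨j, by omega⟩
              · have hXe : X j = ∅ := by
                  rw [Finset.eq_empty_iff_forall_notMem]
                  intro b hb
                  have := (hchar j b).mp hb
                  omega
                refine ⟨j, ?_⟩
                rw [hXe]
                simp only [Finset.sup_empty, Nat.bot_eq_zero]
                have := htlt j; omega
          refine ⟨⟨fun h => absurd h (by rw [hstep]; simp), fun h => absurd h hnM'⟩,
            fun X' t' h => ?_⟩
          rw [hstep] at h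
          simp only [Option.some.injEq, Prod.mk.injEq] at h
          obtain ⟨rfl, rfl⟩ := h
          refine ⟨by simp only [List.length_append, List.length_singleton]; omega,
            fun m hm => ?_, fun j x => ?_⟩
          · simp only [List.length_append, List.length_singleton]
            rcases Nat.eq_zero_or_pos m with rfl | hm0
            · rw [show v.length + 1 - 1 - 0 = v.length from by omega]
              exact getD_concat_len v one one rfl
            · rw [show v.length + 1 - 1 - m = v.length - 1 - (m - 1) from by omega,
                getD_concat_lt v one one (by omega)]
              exact htr (m - 1) (by omega)
          · rw [hchar j x]
            simp only [List.length_append, List.length_singleton]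
            have hpmiff : x + t ≤ v.length →
                (pm one π v j x t ↔ pm one π (v ++ [one]) j x (t + 1)) := by
              intro hxt
              simp only [pm, List.length_append, List.length_singleton]
              constructor
              · intro hp i hi
                rw [show v.length + 1 - (t + 1) - x + i = v.length - t - x + i from by omega,
                  getD_concat_lt v one one (by omega)]
                exact hp i hi
              · intro hp i hi
                have := hp i hi
                rwa [show v.length + 1 - (t + 1) - x + i = v.length - t - x + i from by omega,
                  getD_concat_lt v one one (by omega)] at this
            constructor
            · rintro ⟨h1, h2, h3, h4⟩
              have h3' : x + t + 2 ≤ sp j := by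
                rcases Nat.lt_or_ge (x + t + 1) (sp j) with h | h
                · omega
                · exfalso
                  have hxv : x + t + 1 = sp j := by omega
                  have hx : x ∈ X j := (hchar j x).mpr ⟨h1, h2, h3, h4⟩
                  have hsup : (X j).sup id = x := by
                    refine le_antisymm (Finset.sup_le fun b hb => ?_)
                      (Finset.le_sup (f := id) hx)
                    have := (hchar j b).mp hb
                    simp only [id]; omega
                  exact hex ⟨j, by omega⟩
              exact ⟨h1, by omega, h3', (hpmiff h2).mp h4⟩
            · rintro ⟨h1, h2, h3, h4⟩
              exact ⟨h1, by omega, by omega, (hpmiff (by omega)).mpr h4⟩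
      · -- a ≠ one
        rw [if_neg hao] at hstep
        have hYmem : ∀ j y, y ∈ Ynext π sp X t a j ↔
            (1 ≤ y ∧ y ≤ t + 1 ∧ a ∈ π j y) ∨
            (∃ x ∈ X j, x + t + 1 ≤ sp j ∧ a ∈ π j (x + t + 1) ∧ x + t + 1 = y) := by
          intro j y
          simp only [Ynext, Finset.mem_union, Finset.mem_filter, Finset.mem_Icc,
            Finset.mem_image]
          constructor
          · rintro (⟨⟨h1, h2⟩, h3⟩ | ⟨x, ⟨hx, hx1, hx2⟩, hx3⟩)
            · exact Or.inl ⟨h1, h2, h3⟩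
            · exact Or.inr ⟨x, hx, hx1, hx2, hx3⟩
          · rintro (⟨h1, h2, h3⟩ | ⟨x, hx, hx1, hx2, hx3⟩)
            · exact Or.inl ⟨⟨h1, h2⟩, h3⟩
            · exact Or.inr ⟨x, ⟨hx, hx1, hx2⟩, hx3⟩
        have hYle : ∀ j y, y ∈ Ynext π sp X t a j → y ≤ sp j := by
          intro j y hy
          rcases (hYmem j y).mp hy with ⟨h1, h2, h3⟩ | ⟨x, hx, hx1, hx2, hx3⟩
          · have := htlt j; omega
          · omega
        have hEnd : ∀ j, sp j ∈ Ynext π sp X t a j ↔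
            sp j ≤ v.length + 1 ∧
            ∀ i < sp j, (v ++ [a]).getD (v.length + 1 - sp j + i) one ∈ π j (i + 1) := by
          intro j
          rw [hYmem]
          constructor
          · rintro (⟨h1, h2, h3⟩ | ⟨x, hx, hx1, hx2, hx3⟩)
            · have hspt : sp j = t + 1 := by have := htlt j; omega
              refine ⟨by omega, ?_⟩
              exact buildEnd hone (x := 0) (t := t) (by omega) le_rfl (by omega)
                (fun i hi => absurd hi (by omega)) htr (hspt ▸ h3)
            · obtain ⟨hc1, hc2, hc3, hc4⟩ := (hchar j x).mp hx
              refine ⟨by omega, ?_⟩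
              exact buildEnd hone hx3 le_rfl hc2 hc4 htr (hx3 ▸ hx2)
          · rintro ⟨hspl, hm⟩
            obtain ⟨ha', hd⟩ := destructEnd (hs j) hspl hm
            by_cases hts : t + 1 < sp j
            · obtain ⟨hd1, hd2⟩ := hd t hts
              refine Or.inr ⟨sp j - t - 1, (hchar j _).mpr ⟨by omega, by omega, by omega, hd2⟩,
                by omega, ?_, by omega⟩
              rw [show sp j - t - 1 + t + 1 = sp j from by omega]
              exact ha'
            · exact Or.inl ⟨hs j, by have := htlt j; omega, ha'⟩
        by_cases hex : ∃ j, ((Ynext π sp X t a) j).sup id = sp j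
        · rw [if_pos hex] at hstep
          obtain ⟨j, hj⟩ := hex
          obtain ⟨h1, h2⟩ := (hEnd j).mp ((sup_eq_iff (hs j) (hYle j)).mp hj)
          have hM' : Mtch one π sp (v ++ [a]) :=
            (Mtch_concat v a).mpr (Or.inr ⟨j, h1, h2⟩)
          refine ⟨⟨fun _ => hM', fun _ => hstep⟩, fun X' t' h => ?_⟩
          rw [hstep] at h; cases h
        · rw [if_neg hex] at hstep
          have hYnsp : ∀ j, sp j ∉ Ynext π sp X t a j := by
            intro j hy
            exact hex ⟨j, (sup_eq_iff (hs j) (hYle j)).mpr hy⟩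
          have hnM' : ¬ Mtch one π sp (v ++ [a]) := by
            rw [Mtch_concat]
            rintro (h | ⟨j, hj, hm⟩)
            · exact hnM h
            · exact hYnsp j ((hEnd j).mpr ⟨hj, hm⟩)
          refine ⟨⟨fun h => absurd h (by rw [hstep]; simp), fun h => absurd h hnM'⟩,
            fun X' t' h => ?_⟩
          rw [hstep] at h
          simp only [Option.some.injEq, Prod.mk.injEq] at h
          obtain ⟨rfl, rfl⟩ := h
          refine ⟨by simp, fun m hm => absurd hm (by omega), fun j y => ?_⟩
          simp only [List.length_append, List.length_singleton]
          have hynsp : y ∈ Ynext π sp X t a j → y + 1 ≤ sp j := by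
            intro hy
            have h1 := hYle j y hy
            have h2 : y ≠ sp j := fun h => hYnsp j (h ▸ hy)
            omega
          constructor
          · intro hy
            have hy1 := hynsp hy
            rcases (hYmem j y).mp hy with ⟨h1, h2, h3⟩ | ⟨x, hx, hx1, hx2, hx3⟩
            · refine ⟨h1, by omega, hy1, ?_⟩
              simp only [pm, List.length_append, List.length_singleton]
              intro i hi
              rw [show v.length + 1 - 0 - y + i = v.length + 1 - y + i from by omega]
              exact buildEnd hone (x := 0) (t := y - 1) (by omega) (by omega) (by omega)
                (fun i' hi' => absurd hi' (by omega))
                (fun m hm' => htr m (by omega)) h3 i hi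
            · obtain ⟨hc1, hc2, hc3, hc4⟩ := (hchar j x).mp hx
              refine ⟨by omega, by omega, hy1, ?_⟩
              simp only [pm, List.length_append, List.length_singleton]
              intro i hi
              rw [show v.length + 1 - 0 - y + i = v.length + 1 - y + i from by omega]
              exact buildEnd hone hx3 (by omega) hc2 hc4 htr (hx3 ▸ hx2) i hi
          · rintro ⟨h1, h2, h3, h4⟩
            simp only [pm, List.length_append, List.length_singleton] at h4
            have h4' : ∀ i < y, (v ++ [a]).getD (v.length + 1 - y + i) one ∈ π j (i + 1) := by
              intro i hi
              have := h4 i hi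
              rwa [show v.length + 1 - 0 - y + i = v.length + 1 - y + i from by omega] at this
            obtain ⟨ha', hd⟩ := destructEnd h1 (by omega) h4'
            rw [hYmem]
            by_cases hty : y ≤ t + 1
            · exact Or.inl ⟨h1, hty, ha'⟩
            · obtain ⟨hd1, hd2⟩ := hd t (by omega)
              refine Or.inr ⟨y - t - 1, (hchar j _).mpr ⟨by omega, by omega, by omega, hd2⟩,
                by omega, ?_, by omega⟩
              rw [show y - t - 1 + t + 1 = y from by omega]
              exact ha'

end MainSec
/-- Reading an alignment `w` from the initial state `⟨∅,…,∅,0⟩` of the multi-seed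
automaton for `π^1,…,π^k` ends in the final state iff there is `j` and a position `p` with
`p + s_j - 1 ≤ |w|` at which `π^j` matches `w`. -/
theorem stmt_17 [DecidableEq A] {k : ℕ} (one : A) (π : Fin k → ℕ → Finset A)
    (sp : Fin k → ℕ) (hs : ∀ j, 1 ≤ sp j)
    (hone : ∀ j i, 1 ≤ i → i ≤ sp j → one ∈ π j i) (w : List A) :
    mseedRead one π sp (some (fun _ => (∅ : Finset ℕ), 0)) w = none ↔
      ∃ j p, 1 ≤ p ∧ p + sp j - 1 ≤ w.length ∧ seedMatches one (π j) (sp j) w p := by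
  rw [(mainLemma hs hone w).1]
  constructor
  · rintro ⟨j, q, hq, hm⟩
    refine ⟨j, q + 1, by omega, by have := hs j; omega, by omega, by have := hs j; omega,
      fun i hi1 hi2 => ?_⟩
    have := hm (i - 1) (by omega)
    rwa [show q + (i - 1) = q + 1 + i - 2 from by omega,
      show i - 1 + 1 = i from by omega] at this
  · rintro ⟨j, p, hp1, hp2, -, -, h3⟩
    refine ⟨j, p - 1, by have := hs j; omega, fun i hi => ?_⟩
    have := h3 (i + 1) (by omega) (by omega)
    rwa [show p + (i + 1) - 2 = p - 1 + i from by omega] at this
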